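/- For a function f from a topological space X to a topological space Y, the following are equivalent: (1) f is SR-continuous; (2) f is β-continuous, simply-continuous and contra-sg-continuous. -/
import Mathlib


open Set

section Defs
variable {X : Type*} [TopologicalSpace X]

/-- A set is semi-open if it is contained in the closure of its interior. -/
def SemiOpen (A : Set X) : Prop := A ⊆ closure (interior A)

/-- A set is semi-closed if the interior of its closure is contained in it. -/
def SemiClosed (A : Set X) : Prop := interior (closure A) ⊆ A

/-- A set is semi-regular if it is both semi-open and semi-closed. -/
def SemiRegular (A : Set X) : Prop := SemiOpen A ∧ SemiClosed A

/-- A set is β-open if it is contained in the closure of the interior of its closure. -/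
def BetaOpen (A : Set X) : Prop := A ⊆ closure (interior (closure A))

/-- A set is regular open if it equals the interior of its closure. -/
def RegularOpen (A : Set X) : Prop := A = interior (closure A)

/-- A set is regular closed if it equals the closure of its interior. -/
def RegularClosed (A : Set X) : Prop := A = closure (interior A)

/-- A set is α-open if it is contained in the interior of the closure of its interior. -/
def AlphaOpen (A : Set X) : Prop := A ⊆ interior (closure (interior A))

/-- A set is preopen if it is contained in the interior of its closure. -/
def Preopen (A : Set X) : Prop := A ⊆ interior (closure A)

/-- A set is preclosed if the closure of its interior is contained in it. -/
def Preclosed (A : Set X) : Prop := closure (interior A) ⊆ A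

/-- A B-set is the intersection of an open set and a semi-closed set. -/
def BSet (A : Set X) : Prop := ∃ U F : Set X, IsOpen U ∧ SemiClosed F ∧ A = U ∩ F

/-- The semi-closure of a set: the intersection of all semi-closed sets containing it. -/
def sCl (A : Set X) : Set X := ⋂₀ {B : Set X | SemiClosed B ∧ A ⊆ B}

/-- A set is gs-closed if its semi-closure is contained in every open superset. -/
def GsClosed (A : Set X) : Prop := ∀ U : Set X, IsOpen U → A ⊆ U → sCl A ⊆ U

/-- A set is sg-closed if its semi-closure is contained in every semi-open superset. -/
def SgClosed (A : Set X) : Prop := ∀ U : Set X, SemiOpen U → A ⊆ U → sCl A ⊆ U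

/-- A set is simply-open if it is the union of an open set and a nowhere dense set. -/
def SimplyOpen (A : Set X) : Prop := ∃ U N : Set X, IsOpen U ∧ IsNowhereDense N ∧ A = U ∪ N

end Defs

section FunDefs
variable {X Y : Type*} [TopologicalSpace X] [TopologicalSpace Y]

/-- A function is contra-semicontinuous if preimages of open sets are semi-closed. -/
def ContraSemicontinuous (f : X → Y) : Prop := ∀ V : Set Y, IsOpen V → SemiClosed (f ⁻¹' V)

/-- A function is contra-continuous if preimages of open sets are closed. -/
def ContraContinuous (f : X → Y) : Prop := ∀ V : Set Y, IsOpen V → IsClosed (f ⁻¹' V)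

/-- A function is SR-continuous if preimages of open sets are semi-regular. -/
def SRContinuous (f : X → Y) : Prop := ∀ V : Set Y, IsOpen V → SemiRegular (f ⁻¹' V)

/-- A function is β-continuous if preimages of open sets are β-open. -/
def BetaContinuous (f : X → Y) : Prop := ∀ V : Set Y, IsOpen V → BetaOpen (f ⁻¹' V)

/-- A function is semi-continuous if preimages of open sets are semi-open. -/
def SemiContinuous (f : X → Y) : Prop := ∀ V : Set Y, IsOpen V → SemiOpen (f ⁻¹' V)

/-- A function is completely continuous if preimages of open sets are regular open. -/
def CompletelyContinuous (f : X → Y) : Prop := ∀ V : Set Y, IsOpen V → RegularOpen (f ⁻¹' V)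

/-- A function is precontinuous if preimages of open sets are preopen. -/
def Precontinuous (f : X → Y) : Prop := ∀ V : Set Y, IsOpen V → Preopen (f ⁻¹' V)

/-- A function is RC-continuous if preimages of open sets are regular closed. -/
def RCContinuous (f : X → Y) : Prop := ∀ V : Set Y, IsOpen V → RegularClosed (f ⁻¹' V)

/-- A function is B-continuous if preimages of open sets are B-sets. -/
def BContinuous (f : X → Y) : Prop := ∀ V : Set Y, IsOpen V → BSet (f ⁻¹' V)

/-- A function is contra-gs-continuous if preimages of open sets are gs-closed. -/
def ContraGsContinuous (f : X → Y) : Prop := ∀ V : Set Y, IsOpen V → GsClosed (f ⁻¹' V)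

/-- A function is contra-sg-continuous if preimages of open sets are sg-closed. -/
def ContraSgContinuous (f : X → Y) : Prop := ∀ V : Set Y, IsOpen V → SgClosed (f ⁻¹' V)

/-- A function is simply-continuous if preimages of open sets are simply-open. -/
def SimplyContinuous (f : X → Y) : Prop := ∀ V : Set Y, IsOpen V → SimplyOpen (f ⁻¹' V)

/-- A function is perfectly continuous if preimages of open sets are clopen. -/
def PerfectlyContinuous (f : X → Y) : Prop := ∀ V : Set Y, IsOpen V → IsClopen (f ⁻¹' V)

/-- A function is preclosed if images of closed sets are preclosed. -/
def PreclosedMap (f : X → Y) : Prop := ∀ C : Set X, IsClosed C → Preclosed (f '' C)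

end FunDefs

section SpaceDefs
variable (X : Type*) [TopologicalSpace X]

/-- A space is semi-compact if every semi-open cover has a finite subcover. -/
def SemiCompact : Prop :=
  ∀ S : Set (Set X), (∀ A ∈ S, SemiOpen A) → ⋃₀ S = univ →
    ∃ F : Finset (Set X), ↑F ⊆ S ∧ ⋃₀ (↑F : Set (Set X)) = univ

/-- A space is strongly S-closed if every closed cover has a finite subcover. -/
def StronglySClosed : Prop :=
  ∀ S : Set (Set X), (∀ A ∈ S, IsClosed A) → ⋃₀ S = univ →
    ∃ F : Finset (Set X), ↑F ⊆ S ∧ ⋃₀ (↑F : Set (Set X)) = univ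

/-- A space is mildly compact if every clopen cover has a finite subcover. -/
def MildlyCompact : Prop :=
  ∀ S : Set (Set X), (∀ A ∈ S, IsClopen A) → ⋃₀ S = univ →
    ∃ F : Finset (Set X), ↑F ⊆ S ∧ ⋃₀ (↑F : Set (Set X)) = univ

/-- A space is s-closed if every semi-open cover has a finite subfamily whose
semi-closures cover the space. -/
def IsSClosedSpace : Prop :=
  ∀ S : Set (Set X), (∀ A ∈ S, SemiOpen A) → ⋃₀ S = univ →
    ∃ F : Finset (Set X), ↑F ⊆ S ∧ (⋃ A ∈ F, sCl A) = univ

/-- A space is S-closed if every semi-open cover has a finite subfamily whose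
closures cover the space. -/
def IsCapSClosedSpace : Prop :=
  ∀ S : Set (Set X), (∀ A ∈ S, SemiOpen A) → ⋃₀ S = univ →
    ∃ F : Finset (Set X), ↑F ⊆ S ∧ (⋃ A ∈ F, closure A) = univ

/-- A space is nearly compact if every open cover has a finite subfamily such that the
interiors of the closures of its members cover the space. -/
def NearlyCompact : Prop :=
  ∀ S : Set (Set X), (∀ A ∈ S, IsOpen A) → ⋃₀ S = univ →
    ∃ F : Finset (Set X), ↑F ⊆ S ∧ (⋃ A ∈ F, interior (closure A)) = univ

/-- A space is hyperconnected if every nonempty open set is dense. -/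
def Hyperconnected : Prop := ∀ U : Set X, IsOpen U → U.Nonempty → Dense U

/-- A space satisfies the countable chain condition if every pairwise disjoint family of
nonempty open sets is countable. -/
def CCC : Prop :=
  ∀ S : Set (Set X), (∀ A ∈ S, IsOpen A ∧ A.Nonempty) → S.PairwiseDisjoint id → S.Countable

/-- A space is globally disconnected if every semi-open set is open. -/
def GloballyDisconnected : Prop := ∀ A : Set X, SemiOpen A → IsOpen A

/-- A space is locally indiscrete if every open set is closed. -/
def LocallyIndiscrete : Prop := ∀ U : Set X, IsOpen U → IsClosed U

end SpaceDefs


section Aux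
variable {X : Type*} [TopologicalSpace X]

lemma subset_sCl (A : Set X) : A ⊆ sCl A :=
  subset_sInter (fun _ hB => hB.2)

lemma semiClosed_sCl (A : Set X) : SemiClosed (sCl A) := by
  intro x hx
  refine mem_sInter.mpr (fun B hB => ?_)
  have h1 : closure (sCl A) ⊆ closure B := closure_mono (sInter_subset_of_mem hB)
  exact hB.1 (interior_mono h1 hx)

lemma semiRegular_iff (A : Set X) :
    SemiRegular A ↔ BetaOpen A ∧ SimplyOpen A ∧ SgClosed A := by
  constructor
  · rintro ⟨hso, hsc⟩
    refine ⟨?_, ?_, ?_⟩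
    · exact hso.trans (closure_mono (interior_mono subset_closure))
    · refine ⟨interior A, A \ interior A, isOpen_interior, ?_, ?_⟩
      · rw [IsNowhereDense, eq_empty_iff_forall_notMem]
        intro x hx
        have hNc : closure (A \ interior A) ⊆ (interior A)ᶜ :=
          closure_minimal (fun y hy => hy.2) (isClosed_compl_iff.mpr isOpen_interior)
        have hxcl : x ∈ closure (interior A) := by
          have : closure (A \ interior A) ⊆ closure (interior A) :=
            (closure_mono (fun y hy => hy.1)).trans
              (by rw [← closure_closure (s := interior A)]; exact closure_mono hso)
          exact this (interior_subset hx)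
        obtain ⟨y, hy1, hy2⟩ := (mem_closure_iff.mp hxcl) _ isOpen_interior hx
        exact hNc (interior_subset hy1) hy2
      · ext x
        by_cases h : x ∈ interior A
        · simp [h, interior_subset h]
        · simp [h]
    · intro U _ hAU
      exact (sInter_subset_of_mem (⟨hsc, subset_rfl⟩ : SemiClosed A ∧ A ⊆ A)).trans hAU
  · rintro ⟨hb, ⟨U, N, hU, hN, rfl⟩, hg⟩
    have hdense : Dense (closure N)ᶜ := by
      have := isClosed_isNowhereDense_iff_compl.mp ⟨isClosed_closure, hN.closure⟩
      exact this.2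
    have key : interior (closure (U ∪ N)) ⊆ closure U := by
      intro x hx
      have hsub : interior (closure (U ∪ N)) ∩ (closure N)ᶜ ⊆ closure U := by
        rintro y ⟨hy1, hy2⟩
        have : y ∈ closure (U ∪ N) := interior_subset hy1
        rw [closure_union] at this
        exact this.resolve_right hy2
      have := hdense.open_subset_closure_inter isOpen_interior hx
      exact closure_closure (s := U) ▸ (closure_mono hsub) this
    have hso : SemiOpen (U ∪ N) := by
      have h1 : closure (interior (closure (U ∪ N))) ⊆ closure (interior (U ∪ N)) := by
        calc closure (interior (closure (U ∪ N))) ⊆ closure (closure U) := closure_mono key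
          _ = closure U := closure_closure
          _ ⊆ closure (interior (U ∪ N)) :=
              closure_mono (interior_maximal subset_union_left hU)
      exact hb.trans h1
    refine ⟨hso, ?_⟩
    have hsub : sCl (U ∪ N) ⊆ U ∪ N := hg _ hso subset_rfl
    intro x hx
    have : x ∈ interior (closure (sCl (U ∪ N))) :=
      interior_mono (closure_mono (subset_sCl _)) hx
    exact hsub (semiClosed_sCl _ this)

end Aux

theorem srContinuous_iff_betaContinuous_simplyContinuous_contraSgContinuous
    {X Y : Type*} [TopologicalSpace X] [TopologicalSpace Y] (f : X → Y) :
    SRContinuous f ↔ BetaContinuous f ∧ SimplyContinuous f ∧ ContraSgContinuous f := by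
  constructor
  · intro h
    exact ⟨fun V hV => ((semiRegular_iff _).mp (h V hV)).1,
           fun V hV => ((semiRegular_iff _).mp (h V hV)).2.1,
           fun V hV => ((semiRegular_iff _).mp (h V hV)).2.2⟩
  · rintro ⟨h1, h2, h3⟩ V hV
    exact (semiRegular_iff _).mpr ⟨h1 V hV, h2 V hV, h3 V hV⟩
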